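/- arXiv:1803.11067 — 3 statements merged into one kernel-verified Lean document; each statement's English description precedes it below -/
import Mathlib

section
/- In the generic affine Hecke algebra H_g of type C̃₂ (generators T₀, T₁, T₂ with T_i² = 1 + (q_i - q_i^{-1})T_i, braid relations T₀T₁T₀T₁ = T₁T₀T₁T₀, T₁T₂T₁T₂ = T₂T₁T₂T₁, T₀T₂ = T₂T₀), the elements X₁ = T₂^{-1}T₀T₁T₀^{-1}T₂T₁ and X₂ = T₁^{-1}T₀T₁T₂ commute: X₁X₂ = X₂X₁. -/
section Aux

variable {H : Type*} [Ring H]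

private lemma cancel_aux {x y : H} (h : x * y = 1) (z : H) : x * (y * z) = z := by
  rw [← mul_assoc, h, one_mul]

private lemma swap_aux {x y : H} (h : x * y = y * x) (z : H) :
    x * (y * z) = y * (x * z) := by
  rw [← mul_assoc, h, mul_assoc]

private lemma braid_aux {a b : H} (h : a * b * a * b = b * a * b * a) (z : H) :
    a * (b * (a * (b * z))) = b * (a * (b * (a * z))) := by
  rw [← mul_assoc, ← mul_assoc, ← mul_assoc, h, mul_assoc, mul_assoc, mul_assoc]

private lemma key_aux (a b c a' b' c' : H)
    (haa' : a * a' = 1) (ha'a : a' * a = 1) (hbb' : b * b' = 1) (hb'b : b' * b = 1)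
    (hcc' : c * c' = 1) (hc'c : c' * c = 1)
    (hab : a * b * a * b = b * a * b * a) (hbc : b * c * b * c = c * b * c * b)
    (hac : a * c = c * a) (hc'a : c' * a = a * c') :
    (c' * a * b * a' * c * b) * (b' * a * b * c)
      = (b' * a * b * c) * (c' * a * b * a' * c * b) := by
  have hca : c * a = a * c := hac.symm
  calc (c' * a * b * a' * c * b) * (b' * a * b * c)
      = c' * (a * (b * (a' * (c * (b * (b' * (a * (b * c)))))))) := by
        simp only [mul_assoc]
    _ = c' * (a * (b * (a' * (c * (a * (b * c)))))) := by
        rw [cancel_aux hbb']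
    _ = c' * (a * (b * (a' * (a * (c * (b * c)))))) := by
        rw [swap_aux hca]
    _ = c' * (a * (b * (c * (b * c)))) := by rw [cancel_aux ha'a]
    _ = a * (c' * (b * (c * (b * c)))) := by rw [swap_aux hc'a]
    _ = a * (c' * (c * (b * (c * b)))) := by
        have h' : b * (c * (b * c)) = c * (b * (c * b)) := by
          simpa only [mul_assoc] using hbc
        rw [h']
    _ = a * (b * (c * b)) := by rw [cancel_aux hc'c]
    _ = b' * (b * (a * (b * (a * (a' * (c * b)))))) := by
        rw [cancel_aux hb'b, cancel_aux haa']
    _ = b' * (a * (b * (a * (b * (a' * (c * b)))))) := by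
        rw [braid_aux hab]
    _ = b' * (a * (b * (c * (c' * (a * (b * (a' * (c * b)))))))) := by
        rw [cancel_aux hcc']
    _ = (b' * a * b * c) * (c' * a * b * a' * c * b) := by
        simp only [mul_assoc]

end Aux

/-- In the generic affine Hecke algebra of type `C̃₂`
(generators `T₀, T₁, T₂` over a ring with invertible parameters `q₀, q₁, q₂`,
with quadratic relations `T_i² = 1 + (q_i - q_i⁻¹)T_i` and braid relations
`T₀T₁T₀T₁ = T₁T₀T₁T₀`, `T₁T₂T₁T₂ = T₂T₁T₂T₁`, `T₀T₂ = T₂T₀`), the elements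
`X₁ = T₂⁻¹T₀T₁T₀⁻¹T₂T₁` and `X₂ = T₁⁻¹T₀T₁T₂` commute.  Here each `T_i` is
invertible with `T_i⁻¹ = T_i - (q_i - q_i⁻¹)`. -/
theorem stmt13 {R : Type*} [CommRing R] {H : Type*} [Ring H] [Algebra R H]
    (q₀ q₁ q₂ : Rˣ) (T₀ T₁ T₂ : H)
    (h₀ : T₀ ^ 2 = 1 + ((q₀ : R) - ((q₀⁻¹ : Rˣ) : R)) • T₀)
    (h₁ : T₁ ^ 2 = 1 + ((q₁ : R) - ((q₁⁻¹ : Rˣ) : R)) • T₁)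
    (h₂ : T₂ ^ 2 = 1 + ((q₂ : R) - ((q₂⁻¹ : Rˣ) : R)) • T₂)
    (hb₀₁ : T₀ * T₁ * T₀ * T₁ = T₁ * T₀ * T₁ * T₀)
    (hb₁₂ : T₁ * T₂ * T₁ * T₂ = T₂ * T₁ * T₂ * T₁)
    (hb₀₂ : T₀ * T₂ = T₂ * T₀) :
    ((T₂ - ((q₂ : R) - ((q₂⁻¹ : Rˣ) : R)) • (1 : H)) * T₀ * T₁ *
        (T₀ - ((q₀ : R) - ((q₀⁻¹ : Rˣ) : R)) • (1 : H)) * T₂ * T₁) *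
      ((T₁ - ((q₁ : R) - ((q₁⁻¹ : Rˣ) : R)) • (1 : H)) * T₀ * T₁ * T₂)
    = ((T₁ - ((q₁ : R) - ((q₁⁻¹ : Rˣ) : R)) • (1 : H)) * T₀ * T₁ * T₂) *
      ((T₂ - ((q₂ : R) - ((q₂⁻¹ : Rˣ) : R)) • (1 : H)) * T₀ * T₁ *
        (T₀ - ((q₀ : R) - ((q₀⁻¹ : Rˣ) : R)) • (1 : H)) * T₂ * T₁) := by
  set s₀ : R := (q₀ : R) - ((q₀⁻¹ : Rˣ) : R) with hs₀
  set s₁ : R := (q₁ : R) - ((q₁⁻¹ : Rˣ) : R) with hs₁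
  set s₂ : R := (q₂ : R) - ((q₂⁻¹ : Rˣ) : R) with hs₂
  have inv_right : ∀ (T : H) (s : R), T ^ 2 = 1 + s • T → T * (T - s • 1) = 1 := by
    intro T s h
    rw [mul_sub, mul_smul_comm, mul_one, ← sq, h]
    abel
  have inv_left : ∀ (T : H) (s : R), T ^ 2 = 1 + s • T → (T - s • 1) * T = 1 := by
    intro T s h
    rw [sub_mul, smul_mul_assoc, one_mul, ← sq, h]
    abel
  have hc'a : (T₂ - s₂ • 1) * T₀ = T₀ * (T₂ - s₂ • 1) := by
    rw [sub_mul, mul_sub, ← hb₀₂, smul_mul_assoc, mul_smul_comm, one_mul, mul_one]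
  exact key_aux T₀ T₁ T₂ (T₀ - s₀ • 1) (T₁ - s₁ • 1) (T₂ - s₂ • 1)
    (inv_right T₀ s₀ h₀) (inv_left T₀ s₀ h₀) (inv_right T₁ s₁ h₁) (inv_left T₁ s₁ h₁)
    (inv_right T₂ s₂ h₂) (inv_left T₂ s₂ h₂) hb₀₁ hb₁₂ hb₀₂ hc'a
end

section
/- With the setup of the previous abstract lemma (ring J free on {J_w : w ∈ Γ} with orthonormalizing form ⟨·,·⟩ satisfying ⟨g₁g₂,g₃⟩ = ⟨g₂, g₁*g₃⟩, structure constants γ_{x,y,z^{-1}} and cyclic symmetry γ_{x,y,z} = γ_{y,z,x}), suppose additionally d ∈ Γ, Υ ⊆ Γ, and ε ∈ {±1} are such that J_d J_x = ε J_x for all x ∈ Υ and J_d J_x = 0 for all x ∈ Γ \ Υ. Then for all x, y ∈ Γ: if γ_{x,y,d} ≠ 0 then x ∈ Υ and y = x^{-1}; and γ_{x,x^{-1},d} = ε for every x ∈ Υ. -/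
open scoped Classical

/-- With the setup of Statement 17 (ring `J` free on `{J_w : w ∈ Γ}`
with an orthonormalizing form `φ` satisfying the adjunction identities, structure
constants `γ_{x,y,z} = (b.repr (J_x J_y)) (z⁻¹)`, and cyclic symmetry
`γ_{x,y,z} = γ_{y,z,x}`), suppose additionally that `d ∈ Γ`, `Υ ⊆ Γ` and `ε = ±1` are
such that `J_d J_x = ε J_x` for `x ∈ Υ` and `J_d J_x = 0` for `x ∉ Υ`.  Then for all
`x, y ∈ Γ`: if `γ_{x,y,d} ≠ 0` then `x ∈ Υ` and `y = x⁻¹`; and `γ_{x,x⁻¹,d} = ε` for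
every `x ∈ Υ`. -/
theorem stmt18 {Γ : Type*} (inv : Γ → Γ) (hinv : ∀ w, inv (inv w) = w)
    {J : Type*} [Ring J] (b : Module.Basis Γ ℤ J)
    (φ : J →ₗ[ℤ] J →ₗ[ℤ] ℤ)
    (horth : ∀ x y : Γ, φ (b x) (b y) = if x = y then 1 else 0)
    (st : J →ₗ[ℤ] J) (hst : ∀ w : Γ, st (b w) = b (inv w))
    (hadj₁ : ∀ g₁ g₂ g₃ : J, φ (g₁ * g₂) g₃ = φ g₂ (st g₁ * g₃))
    (hadj₂ : ∀ g₁ g₂ g₃ : J, φ (g₁ * g₂) g₃ = φ g₁ (g₃ * st g₂))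
    (hcyc : ∀ x y z : Γ, (b.repr (b x * b y)) (inv z) = (b.repr (b y * b z)) (inv x))
    (d : Γ) (Υ : Set Γ) (ε : ℤ) (hε : ε = 1 ∨ ε = -1)
    (hd₁ : ∀ x ∈ Υ, b d * b x = ε • b x)
    (hd₂ : ∀ x ∉ Υ, b d * b x = 0) :
    (∀ x y : Γ, (b.repr (b x * b y)) (inv d) ≠ 0 → x ∈ Υ ∧ y = inv x) ∧
    (∀ x ∈ Υ, (b.repr (b x * b (inv x))) (inv d) = ε) := by
  have key : ∀ x y : Γ, (b.repr (b x * b y)) (inv d) = (b.repr (b d * b x)) (inv y) := by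
    intro x y
    rw [hcyc x y d, hcyc y d x]
  constructor
  · intro x y h
    rw [key] at h
    by_cases hx : x ∈ Υ
    · refine ⟨hx, ?_⟩
      rw [hd₁ x hx] at h
      simp only [map_smul, Finsupp.smul_apply, Module.Basis.repr_self, Finsupp.single_apply,
        smul_eq_mul] at h
      by_contra hy
      have : x ≠ inv y := fun hxy => hy (by rw [hxy, hinv])
      simp [this] at h
    · exfalso
      rw [hd₂ x hx] at h
      simp at h
  · intro x hx
    rw [key, hd₁ x hx, map_smul]
    simp [hinv]
end

section
/- Let W be the dihedral group of order 8 generated by s₁, s₂ with (s₁s₂)⁴ = e, let a < b be positive integers, and let H be the Hecke algebra over Z[q,q^{-1}] with T_i² = 1 + (q^{L(s_i)} - q^{-L(s_i)})T_i where L(s₁) = a, L(s₂) = b. Let ¯ be the bar involution of H (the ring involution sending q ↦ q^{-1} together with T_w ↦ (T_{w^{-1}})^{-1}). Then the element C = T_{s₂s₁s₂} + q^{-b}(T_{s₁s₂} + T_{s₂s₁}) + (q^{-b-a} - q^{-b+a})T_{s₂} + q^{-2b}T_{s₁} + (q^{-2b-a} - q^{-2b+a})T_e satisfies C̄ = C.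 -/
open LaurentPolynomial

/-- The element
`C = T_{s₂s₁s₂} + q^{-b}(T_{s₁s₂} + T_{s₂s₁}) + (q^{-b-a} - q^{-b+a})T_{s₂}
     + q^{-2b}T_{s₁} + (q^{-2b-a} - q^{-2b+a})T_e`
of the Hecke algebra of the dihedral group generated by `s₁, s₂` with weights
`L(s₁) = a`, `L(s₂) = b`, where `q^n = T n` in `ℤ[q,q⁻¹]`. -/
noncomputable def Celt {W H : Type*} [Group W] [Ring H] [Module (LaurentPolynomial ℤ) H]
    (Tb : W → H) (s₁ s₂ : W) (a b : ℕ) : H :=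
  Tb (s₂ * s₁ * s₂)
    + (T (-(b : ℤ)) : LaurentPolynomial ℤ) • (Tb (s₁ * s₂) + Tb (s₂ * s₁))
    + ((T (-(b : ℤ) - (a : ℤ)) - T (-(b : ℤ) + (a : ℤ)) : LaurentPolynomial ℤ)) • Tb s₂
    + (T (-(2 * (b : ℤ))) : LaurentPolynomial ℤ) • Tb s₁
    + ((T (-(2 * (b : ℤ)) - (a : ℤ)) - T (-(2 * (b : ℤ)) + (a : ℤ)) : LaurentPolynomial ℤ)) • Tb 1

/-- Let `W` be the dihedral group of order 8 generated by `s₁, s₂` with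
`(s₁s₂)⁴ = e` (the Coxeter group of the matrix with off-diagonal entry `4`), `a < b`
positive integers, and `H` the Hecke algebra over `ℤ[q,q⁻¹]`, with standard basis `{T_w}`
and the usual multiplication rule for the weight function with `L(s₁) = a`, `L(s₂) = b`.
Let `bar` be the bar involution of `H`: the ring involution sending `q ↦ q⁻¹` together
with `T_w ↦ (T_{w⁻¹})⁻¹`.  Then the element `C` above satisfies `bar C = C`. -/
theorem stmt19 {W : Type*} [Group W]
    {M : CoxeterMatrix (Fin 2)} (hM : M 0 1 = 4)
    (cs : CoxeterSystem M W)
    (a b : ℕ) (ha : 0 < a) (hab : a < b)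
    (L : W → ℕ) (hLs₁ : L (cs.simple 0) = a) (hLs₂ : L (cs.simple 1) = b)
    (hL : ∀ u v : W, cs.length (u * v) = cs.length u + cs.length v →
      L (u * v) = L u + L v)
    {H : Type*} [Ring H] [Algebra (LaurentPolynomial ℤ) H]
    (Tb : W → H) (bas : Module.Basis W (LaurentPolynomial ℤ) H) (hbas : ∀ w : W, bas w = Tb w)
    (hmul_incr : ∀ (w : W) (i : Fin 2), cs.length (w * cs.simple i) = cs.length w + 1 →
      Tb w * Tb (cs.simple i) = Tb (w * cs.simple i))
    (hmul_decr : ∀ (w : W) (i : Fin 2), cs.length (w * cs.simple i) + 1 = cs.length w →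
      Tb w * Tb (cs.simple i) = Tb (w * cs.simple i)
        + ((T (L (cs.simple i) : ℤ) - T (-(L (cs.simple i) : ℤ)) : LaurentPolynomial ℤ)) • Tb w)
    (bar : H →+* H)
    (hbar_q : ∀ (n : ℤ) (h : H),
      bar ((T n : LaurentPolynomial ℤ) • h) = (T (-n) : LaurentPolynomial ℤ) • bar h)
    (hbar_T : ∀ w : W, bar (Tb w) * Tb w⁻¹ = 1 ∧ Tb w⁻¹ * bar (Tb w) = 1) :
    bar (Celt Tb (cs.simple 0) (cs.simple 1) a b) = Celt Tb (cs.simple 0) (cs.simple 1) a b := by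
  -- ### length facts via a lift to the dihedral group of order 8
  have hM' : M 1 0 = 4 := (M.symmetric 1 0).trans hM
  have hf : CoxeterMatrix.IsLiftable M (fun i : Fin 2 => DihedralGroup.sr (i.val : ZMod 4)) := by
    intro i i'
    fin_cases i <;> fin_cases i' <;>
      [rw [show M.M ⟨0,by norm_num⟩ ⟨0,by norm_num⟩ = 1 from M.diagonal 0];
       rw [show M.M ⟨0,by norm_num⟩ ⟨1,by norm_num⟩ = 4 from hM];
       rw [show M.M ⟨1,by norm_num⟩ ⟨0,by norm_num⟩ = 4 from hM'];
       rw [show M.M ⟨1,by norm_num⟩ ⟨1,by norm_num⟩ = 1 from M.diagonal 1]] <;> decide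
  set φ := cs.lift ⟨_, hf⟩ with hφdef
  have hφ : ∀ i : Fin 2, φ (cs.simple i) = DihedralGroup.sr (i.val : ZMod 4) := fun i =>
    cs.lift_apply_simple hf i
  have key : ∀ i j : Fin 2, i ≠ j → cs.length (cs.simple i * cs.simple j) = 2 := by
    intro i j hij
    rcases cs.length_mul_simple (cs.simple i) j with h | h
    · rw [h, cs.length_simple]
    · exfalso
      rw [cs.length_simple] at h
      have h0 : cs.length (cs.simple i * cs.simple j) = 0 := by omega
      have h1 : cs.simple i * cs.simple j = 1 := cs.length_eq_zero_iff.mp h0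
      have := congrArg φ h1
      rw [map_mul, map_one, hφ i, hφ j] at this
      fin_cases i <;> fin_cases j <;>
        first | (exact absurd rfl hij) | exact absurd this (by decide)
  have l01 : cs.length (cs.simple 0 * cs.simple 1) = 2 := key 0 1 (by decide)
  have l10 : cs.length (cs.simple 1 * cs.simple 0) = 2 := key 1 0 (by decide)
  have l101 : cs.length (cs.simple 1 * cs.simple 0 * cs.simple 1) = 3 := by
    rcases cs.length_mul_simple (cs.simple 1 * cs.simple 0) 1 with h | h
    · rw [h, l10]
    · exfalso
      rw [l10] at h
      have h1 : cs.length (cs.simple 1 * cs.simple 0 * cs.simple 1) = 1 := by omega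
      rcases cs.length_eq_one_iff.mp h1 with ⟨j, hj⟩
      have := congrArg φ hj
      rw [map_mul, map_mul, hφ 0, hφ 1, hφ j] at this
      fin_cases j <;> exact absurd this (by decide)
  -- ### basic Hecke algebra facts
  obtain ⟨hb0l, hb0r⟩ := hbar_T (cs.simple 0)
  obtain ⟨hb1l, hb1r⟩ := hbar_T (cs.simple 1)
  rw [cs.inv_simple 0] at hb0l hb0r
  rw [cs.inv_simple 1] at hb1l hb1r
  have hT1 : Tb 1 = 1 := by
    have h0 : Tb 1 * Tb (cs.simple 0) = Tb (cs.simple 0) := by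
      have := hmul_incr 1 0 (by rw [one_mul, cs.length_simple, cs.length_one])
      rwa [one_mul] at this
    calc Tb 1 = Tb 1 * (Tb (cs.simple 0) * bar (Tb (cs.simple 0))) := by rw [hb0r, mul_one]
      _ = (Tb 1 * Tb (cs.simple 0)) * bar (Tb (cs.simple 0)) := by rw [mul_assoc]
      _ = Tb (cs.simple 0) * bar (Tb (cs.simple 0)) := by rw [h0]
      _ = 1 := hb0r
  have q0 : Tb (cs.simple 0) * Tb (cs.simple 0)
      = 1 + ((T (a:ℤ) - T (-(a:ℤ)) : LaurentPolynomial ℤ)) • Tb (cs.simple 0) := by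
    have := hmul_decr (cs.simple 0) 0
      (by rw [cs.simple_mul_simple_self 0, cs.length_one, cs.length_simple])
    rwa [cs.simple_mul_simple_self 0, hT1, hLs₁] at this
  have q1 : Tb (cs.simple 1) * Tb (cs.simple 1)
      = 1 + ((T (b:ℤ) - T (-(b:ℤ)) : LaurentPolynomial ℤ)) • Tb (cs.simple 1) := by
    have := hmul_decr (cs.simple 1) 1
      (by rw [cs.simple_mul_simple_self 1, cs.length_one, cs.length_simple])
    rwa [cs.simple_mul_simple_self 1, hT1, hLs₂] at this
  have bar0 : bar (Tb (cs.simple 0))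
      = Tb (cs.simple 0) - ((T (a:ℤ) - T (-(a:ℤ)) : LaurentPolynomial ℤ)) • 1 := by
    have hinv : Tb (cs.simple 0) * (Tb (cs.simple 0)
        - ((T (a:ℤ) - T (-(a:ℤ)) : LaurentPolynomial ℤ)) • 1) = 1 := by
      rw [mul_sub, q0, mul_smul_comm, mul_one]; abel
    calc bar (Tb (cs.simple 0))
        = bar (Tb (cs.simple 0)) * (Tb (cs.simple 0) * (Tb (cs.simple 0)
            - ((T (a:ℤ) - T (-(a:ℤ)) : LaurentPolynomial ℤ)) • 1)) := by rw [hinv, mul_one]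
      _ = (bar (Tb (cs.simple 0)) * Tb (cs.simple 0)) * (Tb (cs.simple 0)
            - ((T (a:ℤ) - T (-(a:ℤ)) : LaurentPolynomial ℤ)) • 1) := by rw [mul_assoc]
      _ = _ := by rw [hb0l, one_mul]
  have bar1 : bar (Tb (cs.simple 1))
      = Tb (cs.simple 1) - ((T (b:ℤ) - T (-(b:ℤ)) : LaurentPolynomial ℤ)) • 1 := by
    have hinv : Tb (cs.simple 1) * (Tb (cs.simple 1)
        - ((T (b:ℤ) - T (-(b:ℤ)) : LaurentPolynomial ℤ)) • 1) = 1 := by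
      rw [mul_sub, q1, mul_smul_comm, mul_one]; abel
    calc bar (Tb (cs.simple 1))
        = bar (Tb (cs.simple 1)) * (Tb (cs.simple 1) * (Tb (cs.simple 1)
            - ((T (b:ℤ) - T (-(b:ℤ)) : LaurentPolynomial ℤ)) • 1)) := by rw [hinv, mul_one]
      _ = (bar (Tb (cs.simple 1)) * Tb (cs.simple 1)) * (Tb (cs.simple 1)
            - ((T (b:ℤ) - T (-(b:ℤ)) : LaurentPolynomial ℤ)) • 1) := by rw [mul_assoc]
      _ = _ := by rw [hb1l, one_mul]
  have p01 : Tb (cs.simple 0 * cs.simple 1) = Tb (cs.simple 0) * Tb (cs.simple 1) :=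
    (hmul_incr (cs.simple 0) 1 (by rw [l01, cs.length_simple])).symm
  have p10 : Tb (cs.simple 1 * cs.simple 0) = Tb (cs.simple 1) * Tb (cs.simple 0) :=
    (hmul_incr (cs.simple 1) 0 (by rw [l10, cs.length_simple])).symm
  have p101 : Tb (cs.simple 1 * cs.simple 0 * cs.simple 1)
      = Tb (cs.simple 1) * Tb (cs.simple 0) * Tb (cs.simple 1) := by
    have := hmul_incr (cs.simple 1 * cs.simple 0) 1 (by rw [l101, l10])
    rw [p10] at this; exact this.symm
  -- ### the main computation
  have hb : (T (b:ℤ) : LaurentPolynomial ℤ) * T (-(b:ℤ)) = 1 := by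
    rw [← T_add]; norm_num
  have ha' : (T (a:ℤ) : LaurentPolynomial ℤ) * T (-(a:ℤ)) = 1 := by
    rw [← T_add]; norm_num
  simp only [Celt, hT1, p101, p01, p10, sub_smul, map_add, map_sub, map_mul, map_one, hbar_q,
    bar0, bar1]
  simp only [mul_sub, sub_mul, mul_add, add_mul, smul_mul_assoc, mul_smul_comm, mul_one,
    one_mul, smul_smul, smul_sub, smul_add, q1]
  simp only [show (2*(b:ℤ)) = (b:ℤ)+(b:ℤ) from two_mul _, sub_eq_add_neg, neg_add_rev,
    neg_neg, T_add]
  match_scalars <;> first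
    | ring1
    | linear_combination ((T (a:ℤ) : LaurentPolynomial ℤ) - T (-(a:ℤ))) * hb
    | linear_combination (-(T (a:ℤ) : LaurentPolynomial ℤ) + T (-(a:ℤ))) * hb
    | linear_combination (T (a:ℤ) : LaurentPolynomial ℤ) * hb
    | linear_combination (-(T (a:ℤ)) : LaurentPolynomial ℤ) * hb
    | linear_combination (T (-(a:ℤ)) : LaurentPolynomial ℤ) * hb
    | linear_combination (-(T (-(a:ℤ))) : LaurentPolynomial ℤ) * hb
    | linear_combination hb
    | linear_combination (((T (a:ℤ) : LaurentPolynomial ℤ) - T (-(a:ℤ))) * T (-(b:ℤ))) * hb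
    | linear_combination (-((T (a:ℤ) : LaurentPolynomial ℤ) - T (-(a:ℤ))) * T (-(b:ℤ))) * hb
end
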